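/- Let φ₁, φ₂ : (V₁,τ) → (V₂,η) be homomorphisms of conic representations of a topological group G such that (V₂,η) is irreducible and the induced action of G on the closure of the set of extreme points of some compact section Q of V₁ is minimal. Then φ₂ = a·φ₁ for some real number a > 0. -/

import Mathlib

/-!
The sum `Θ = φ₁ + φ₂` is again a homomorphism. The cone spanned by `Θ(Q)` is closed (its base is
compact and avoids `0`) and invariant, so by irreducibility it is `V₂`; hence the radial projection
`N` of `Θ` maps `Q` onto the compact section `Q₂` of `V₂`, and it maps open segments into open
segments. By Krein–Milman (in the weak topology, Hausdorff since the dual separates points) the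
fibre of an extreme point `e` of `Q₂` contains an extreme point `x` of `Q`. Since `N x = e` lies in
the open segment between the projections of `φ₁ x` and `φ₂ x`, these coincide: `φ₂ x = a • φ₁ x`
with `a > 0`. The set where `φ₂ = a • φ₁` is closed and contains the orbit of `x` under the induced
action, so by minimality it contains the extreme points of `Q`. It is convex on `Q`, so by
Krein–Milman again it contains `Q`, and by homogeneity all of `V₁`.
-/

open Set

/-- `Q` is a section of the cone `V`, defined by the continuous conic (additive, positively
homogeneous, nonnegative) function `L`, which is strictly positive away from `0`. -/
structure IsConicSection {X : Type*} [AddCommGroup X] [Module ℝ X] [TopologicalSpace X]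
    (V : Set X) (L : X → ℝ) (Q : Set X) : Prop where
  continuousOn : ContinuousOn L V
  nonneg : ∀ x ∈ V, 0 ≤ L x
  map_add : ∀ x ∈ V, ∀ y ∈ V, L (x + y) = L x + L y
  map_smul : ∀ x ∈ V, ∀ a : ℝ, 0 ≤ a → L (a • x) = a * L x
  pos : ∀ x ∈ V, x ≠ 0 → 0 < L x
  sect_eq : Q = {x ∈ V | L x = 1}

/-- A conic representation of a topological group `G`: a nonzero cone `V` (a subset of a real
topological vector space closed under nonnegative linear combinations) admitting a compact
section, together with a continuous action `τ` of `G` on `V` by maps preserving nonnegative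
linear combinations. -/
structure IsConicRep (G : Type*) {X : Type*} [Group G] [TopologicalSpace G]
    [AddCommGroup X] [Module ℝ X] [TopologicalSpace X]
    (V : Set X) (τ : G → X → X) : Prop where
  nonempty : V.Nonempty
  ne_zero : V ≠ {0}
  cone : ∀ x ∈ V, ∀ y ∈ V, ∀ a b : ℝ, 0 ≤ a → 0 ≤ b → a • x + b • y ∈ V
  mapsTo : ∀ g : G, MapsTo (τ g) V V
  continuousOn : ContinuousOn (fun p : G × X => τ p.1 p.2) (univ ×ˢ V)
  act_one : ∀ x ∈ V, τ 1 x = x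
  act_mul : ∀ g h : G, ∀ x ∈ V, τ (g * h) x = τ g (τ h x)
  conic_act : ∀ g : G, ∀ x ∈ V, ∀ y ∈ V, ∀ a b : ℝ, 0 ≤ a → 0 ≤ b →
    τ g (a • x + b • y) = a • τ g x + b • τ g y
  exists_compact_section : ∃ (L : X → ℝ) (Q : Set X), IsConicSection V L Q ∧ IsCompact Q

/-- A homomorphism of conic representations of `G`: a continuous map preserving nonnegative
linear combinations, vanishing only at `0`, and commuting with the group actions. -/
structure IsConicHom (G : Type*) {X₁ X₂ : Type*} [Group G]
    [AddCommGroup X₁] [Module ℝ X₁] [TopologicalSpace X₁]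
    [AddCommGroup X₂] [Module ℝ X₂] [TopologicalSpace X₂]
    (V₁ : Set X₁) (τ : G → X₁ → X₁) (V₂ : Set X₂) (η : G → X₂ → X₂)
    (φ : X₁ → X₂) : Prop where
  continuousOn : ContinuousOn φ V₁
  mapsTo : MapsTo φ V₁ V₂
  conic : ∀ x ∈ V₁, ∀ y ∈ V₁, ∀ a b : ℝ, 0 ≤ a → 0 ≤ b →
    φ (a • x + b • y) = a • φ x + b • φ y
  ne_zero : ∀ x ∈ V₁, x ≠ 0 → φ x ≠ 0
  equivariant : ∀ g : G, ∀ x ∈ V₁, φ (τ g x) = η g (φ x)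

/-- A conic representation is irreducible if its only nonzero closed `G`-invariant subcone
is the whole cone. -/
def IsIrreducibleConicRep (G : Type*) {X : Type*} [Group G]
    [AddCommGroup X] [Module ℝ X] [TopologicalSpace X]
    (V : Set X) (τ : G → X → X) : Prop :=
  ∀ W : Set X, W ⊆ V → W.Nonempty → W ≠ {0} → IsClosed W →
    (∀ x ∈ W, ∀ y ∈ W, ∀ a b : ℝ, 0 ≤ a → 0 ≤ b → a • x + b • y ∈ W) →
    (∀ g : G, MapsTo (τ g) W W) → W = V

/-- A conic representation is degenerate if it admits a `G`-invariant section. -/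
def IsDegenerateConicRep (G : Type*) {X : Type*} [Group G]
    [AddCommGroup X] [Module ℝ X] [TopologicalSpace X]
    (V : Set X) (τ : G → X → X) : Prop :=
  ∃ (L : X → ℝ) (Q : Set X), IsConicSection V L Q ∧ ∀ g : G, MapsTo (τ g) Q Q

open Topology Filter Pointwise

section SeparatingDual

variable {X : Type*} [AddCommGroup X] [Module ℝ X] [TopologicalSpace X] [SeparatingDual ℝ X]

instance : LocallyConvexSpace ℝ (WeakSpace ℝ X) := WeakBilin.locallyConvexSpace

/- Krein–Milman without local convexity: pass to the weak topology, which is locally convex,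
Hausdorff because the dual separates points, and coarser than the given one. -/

theorem IsCompact.extremePoints_nonempty_of_separatingDual {s : Set X} (hs : IsCompact s)
    (hne : s.Nonempty) : (s.extremePoints ℝ).Nonempty := by
  have h : ((toWeakSpace ℝ X '' s).extremePoints ℝ).Nonempty :=
    (hs.image (toWeakSpaceCLM ℝ X).continuous).extremePoints_nonempty (hne.image _)
  rw [← image_extremePoints] at h
  exact h.of_image

theorem closure_convexHull_extremePoints_of_separatingDual [T2Space X] {s : Set X}
    (hs : IsCompact s) (hconv : Convex ℝ s) : closure (convexHull ℝ (s.extremePoints ℝ)) = s := by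
  set e := toWeakSpace ℝ X
  have he : Continuous e := (toWeakSpaceCLM ℝ X).continuous
  have hsub : closure (convexHull ℝ (s.extremePoints ℝ)) ⊆ s :=
    closure_minimal (convexHull_min extremePoints_subset hconv) hs.isClosed
  have hKM := closure_convexHull_extremePoints (hs.image he) (hconv.linear_image e.toLinearMap)
  have hhull := (e : X →ₗ[ℝ] WeakSpace ℝ X).image_convexHull (s.extremePoints ℝ)
  rw [LinearEquiv.coe_coe] at hhull
  rw [← image_extremePoints, ← hhull] at hKM
  refine hsub.antisymm ((image_subset_image_iff e.injective).1 ?_)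
  rw [← hKM]
  exact closure_minimal (image_mono subset_closure)
    ((hs.of_isClosed_subset isClosed_closure hsub).image he).isClosed

theorem surjOn_extremePoints_image_of_mapsTo_openSegment [T2Space X] {Y : Type*}
    [AddCommGroup Y] [Module ℝ Y] [TopologicalSpace Y] [T1Space Y] {s : Set X} {f : X → Y}
    (hs : IsCompact s) (hf : ContinuousOn f s)
    (hseg : ∀ x ∈ s, ∀ y ∈ s, MapsTo f (openSegment ℝ x y) (openSegment ℝ (f x) (f y))) :
    SurjOn f (s.extremePoints ℝ) ((f '' s).extremePoints ℝ) := by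
  intro w hw
  have hfiber : IsCompact {x ∈ s | f x = w} :=
    hs.of_isClosed_subset (hf.preimage_isClosed_of_isClosed hs.isClosed isClosed_singleton)
      (sep_subset _ _)
  have hw' : w ∈ f '' s := extremePoints_subset hw
  obtain ⟨x, ⟨hxs, rfl⟩, hx⟩ := hfiber.extremePoints_nonempty_of_separatingDual hw'
  refine ⟨x, ⟨hxs, fun y hy z hz hxyz => ?_⟩, rfl⟩
  have hfy := hw.2 (mem_image_of_mem f hy) (mem_image_of_mem f hz) (hseg y hy z hz hxyz)
  have hfz := hw.2 (mem_image_of_mem f hz) (mem_image_of_mem f hy)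
    (hseg z hz y hy (openSegment_symm ℝ y z ▸ hxyz))
  exact hx ⟨hy, hfy⟩ ⟨hz, hfz⟩ hxyz

end SeparatingDual

theorem IsCompact.isClosed_Ici_smul {X : Type*} [AddCommGroup X] [Module ℝ X]
    [TopologicalSpace X] [ContinuousSMul ℝ X] [T2Space X] {K : Set X} (hK : IsCompact K)
    (h0 : (0 : X) ∉ K) : IsClosed (Ici (0 : ℝ) • K) := by
  refine isClosed_of_closure_subset fun v hv => ?_
  -- small scalars move a neighbourhood of `v` off `K`, which bounds the scalars near `v`
  have hsmall : ∀ᶠ p : ℝ × X in 𝓝 0 ×ˢ 𝓝 v, p.1 • p.2 ∈ Kᶜ := by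
    rw [← nhds_prod_eq]
    exact (continuous_smul.tendsto' ((0 : ℝ), v) 0 (zero_smul ℝ v)).eventually
      (hK.isClosed.isOpen_compl.mem_nhds h0)
  obtain ⟨p, hp, W, hW, hpW⟩ := eventually_prod_iff.1 hsmall
  obtain ⟨ε, hε, hεp⟩ := Metric.eventually_nhds_iff.1 hp
  obtain ⟨U, hUW, hU, hvU⟩ := mem_nhds_iff.1 hW
  have hbounded : U ∩ Ici (0 : ℝ) • K ⊆ Icc (0 : ℝ) ε⁻¹ • K := by
    rintro _ ⟨hwU, t, ht, k, hk, rfl⟩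
    refine ⟨t, ⟨ht, le_of_not_gt fun hεt => hpW (hεp (y := t⁻¹) ?_) (hUW hwU) ?_⟩, k, hk, rfl⟩
    · have ht0 : 0 < t := (inv_pos.2 hε).trans hεt
      rw [Real.dist_0_eq_abs, abs_of_pos (inv_pos.2 ht0)]
      exact inv_lt_of_inv_lt₀ hε hεt
    · rwa [inv_smul_smul₀ ((inv_pos.2 hε).trans hεt).ne']
  obtain ⟨t, ht, k, hk, rfl⟩ :=
    closure_minimal hbounded (isCompact_Icc.smul_set hK).isClosed (hU.inter_closure ⟨hvU, hv⟩)
  exact ⟨t, ht.1, k, hk, rfl⟩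

/-- Radial projection onto the section `L⁻¹(1)`; the induced action is
`ρ_g x = sectionProj L (τ g x)`. -/
noncomputable def sectionProj {X : Type*} [AddCommGroup X] [Module ℝ X] (L : X → ℝ) (x : X) : X :=
  (L x)⁻¹ • x

namespace IsConicSection

variable {X : Type*} [AddCommGroup X] [Module ℝ X] [TopologicalSpace X] {V Q : Set X}
  {L : X → ℝ} {x y : X}

theorem subset (hsec : IsConicSection V L Q) : Q ⊆ V := by
  rw [hsec.sect_eq]
  exact sep_subset _ _

theorem eq_one (hsec : IsConicSection V L Q) (hx : x ∈ Q) : L x = 1 := by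
  rw [hsec.sect_eq] at hx
  exact hx.2

theorem map_zero (hsec : IsConicSection V L Q) (h0 : (0 : X) ∈ V) : L 0 = 0 := by
  simpa using hsec.map_smul 0 h0 0 le_rfl

theorem ne_zero_of_mem (hsec : IsConicSection V L Q) (hx : x ∈ Q) : x ≠ 0 := by
  rintro rfl
  have h := hsec.eq_one hx
  rw [hsec.map_zero (hsec.subset hx)] at h
  exact zero_ne_one h

theorem smul_sectionProj (hsec : IsConicSection V L Q) (hx : x ∈ V) :
    L x • sectionProj L x = x := by
  rcases eq_or_ne x 0 with rfl | hx0
  · simp [sectionProj]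
  · exact smul_inv_smul₀ (hsec.pos x hx hx0).ne' x

theorem sectionProj_mem (hsec : IsConicSection V L Q)
    (hcone : ∀ x ∈ V, ∀ y ∈ V, ∀ a b : ℝ, 0 ≤ a → 0 ≤ b → a • x + b • y ∈ V)
    (hx : x ∈ V) (hx0 : x ≠ 0) : sectionProj L x ∈ Q := by
  have hLx := hsec.pos x hx hx0
  have hmem : (L x)⁻¹ • x ∈ V := by
    simpa using hcone x hx x hx (L x)⁻¹ 0 (inv_nonneg.2 hLx.le) le_rfl
  rw [hsec.sect_eq]
  exact ⟨hmem, by rw [sectionProj, hsec.map_smul x hx _ (inv_nonneg.2 hLx.le),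
    inv_mul_cancel₀ hLx.ne']⟩

theorem sectionProj_eq_self (hsec : IsConicSection V L Q) (hx : x ∈ Q) : sectionProj L x = x := by
  rw [sectionProj, hsec.eq_one hx, inv_one, one_smul]

theorem sectionProj_smul (hsec : IsConicSection V L Q) (hx : x ∈ V) {c : ℝ} (hc : 0 < c) :
    sectionProj L (c • x) = sectionProj L x := by
  rw [sectionProj, sectionProj, hsec.map_smul x hx c hc.le, smul_smul, mul_inv_rev,
    mul_assoc, inv_mul_cancel₀ hc.ne', mul_one]

theorem sectionProj_add_mem_openSegment (hsec : IsConicSection V L Q) (hx : x ∈ V)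
    (hx0 : x ≠ 0) (hy : y ∈ V) (hy0 : y ≠ 0) :
    sectionProj L (x + y) ∈ openSegment ℝ (sectionProj L x) (sectionProj L y) := by
  have hLx := hsec.pos x hx hx0
  have hLy := hsec.pos y hy hy0
  have hsum : 0 < L x + L y := add_pos hLx hLy
  refine ⟨L x / (L x + L y), L y / (L x + L y), div_pos hLx hsum, div_pos hLy hsum,
    by rw [← add_div, div_self hsum.ne'], ?_⟩
  rw [sectionProj, sectionProj, sectionProj, hsec.map_add x hx y hy, smul_smul, smul_smul,
    smul_add]
  congr 2 <;> field_simp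

theorem continuousOn_sectionProj [ContinuousSMul ℝ X] (hsec : IsConicSection V L Q) :
    ContinuousOn (sectionProj L) (V \ {0}) :=
  ((hsec.continuousOn.mono sdiff_subset).inv₀ fun x hx => (hsec.pos x hx.1 hx.2).ne').smul
    continuousOn_id

theorem convex (hsec : IsConicSection V L Q)
    (hcone : ∀ x ∈ V, ∀ y ∈ V, ∀ a b : ℝ, 0 ≤ a → 0 ≤ b → a • x + b • y ∈ V) :
    Convex ℝ Q := by
  intro x hx y hy a b ha hb hab
  have hxV := hsec.subset hx
  have hyV := hsec.subset hy
  have hax : a • x ∈ V := by simpa using hcone x hxV x hxV a 0 ha le_rfl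
  have hby : b • y ∈ V := by simpa using hcone y hyV y hyV b 0 hb le_rfl
  rw [hsec.sect_eq]
  refine ⟨hcone x hxV y hyV a b ha hb, ?_⟩
  rw [hsec.map_add _ hax _ hby, hsec.map_smul x hxV a ha, hsec.map_smul y hyV b hb,
    hsec.eq_one hx, hsec.eq_one hy, mul_one, mul_one, hab]

theorem Ici_smul_eq (hsec : IsConicSection V L Q)
    (hcone : ∀ x ∈ V, ∀ y ∈ V, ∀ a b : ℝ, 0 ≤ a → 0 ≤ b → a • x + b • y ∈ V)
    (hQ : Q.Nonempty) : Ici (0 : ℝ) • Q = V := by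
  refine Subset.antisymm ?_ fun x hx => ?_
  · rintro _ ⟨t, ht, q, hq, rfl⟩
    simpa using hcone q (hsec.subset hq) q (hsec.subset hq) t 0 ht le_rfl
  rcases eq_or_ne x 0 with rfl | hx0
  · obtain ⟨q, hq⟩ := hQ
    exact ⟨0, le_refl (0 : ℝ), q, hq, zero_smul ℝ q⟩
  · exact ⟨L x, hsec.nonneg x hx, _, hsec.sectionProj_mem hcone hx hx0, hsec.smul_sectionProj hx⟩

theorem exists_pos_smul_eq_of_sectionProj_add_mem_extremePoints (hsec : IsConicSection V L Q)
    (hcone : ∀ x ∈ V, ∀ y ∈ V, ∀ a b : ℝ, 0 ≤ a → 0 ≤ b → a • x + b • y ∈ V)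
    (hx : x ∈ V) (hx0 : x ≠ 0) (hy : y ∈ V) (hy0 : y ≠ 0)
    (hext : sectionProj L (x + y) ∈ Q.extremePoints ℝ) : ∃ a : ℝ, 0 < a ∧ y = a • x := by
  have hseg := hsec.sectionProj_add_mem_openSegment hx hx0 hy hy0
  have hxQ := hsec.sectionProj_mem hcone hx hx0
  have hyQ := hsec.sectionProj_mem hcone hy hy0
  have hx' := hext.2 hxQ hyQ hseg
  have hy' := hext.2 hyQ hxQ (openSegment_symm ℝ (sectionProj L x) _ ▸ hseg)
  refine ⟨L y / L x, div_pos (hsec.pos y hy hy0) (hsec.pos x hx hx0), ?_⟩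
  calc y = L y • sectionProj L y := (hsec.smul_sectionProj hy).symm
    _ = L y • sectionProj L x := by rw [hx', hy']
    _ = (L y / L x) • x := by rw [sectionProj, smul_smul, div_eq_mul_inv]

end IsConicSection

namespace IsConicRep

variable {G X : Type*} [Group G] [TopologicalSpace G] [AddCommGroup X] [Module ℝ X]
  [TopologicalSpace X] {V : Set X} {τ : G → X → X} {x y : X}

theorem smul_mem (hrep : IsConicRep G V τ) (hx : x ∈ V) {c : ℝ} (hc : 0 ≤ c) : c • x ∈ V := by
  simpa using hrep.cone x hx x hx c 0 hc le_rfl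

theorem add_mem (hrep : IsConicRep G V τ) (hx : x ∈ V) (hy : y ∈ V) : x + y ∈ V := by
  simpa using hrep.cone x hx y hy 1 1 zero_le_one zero_le_one

theorem act_smul (hrep : IsConicRep G V τ) (g : G) (hx : x ∈ V) {c : ℝ} (hc : 0 ≤ c) :
    τ g (c • x) = c • τ g x := by
  simpa using hrep.conic_act g x hx x hx c 0 hc le_rfl

theorem act_add (hrep : IsConicRep G V τ) (g : G) (hx : x ∈ V) (hy : y ∈ V) :
    τ g (x + y) = τ g x + τ g y := by
  simpa using hrep.conic_act g x hx y hy 1 1 zero_le_one zero_le_one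

theorem act_ne_zero (hrep : IsConicRep G V τ) (g : G) (hx : x ∈ V) (hx0 : x ≠ 0) :
    τ g x ≠ 0 := by
  intro h
  have h0 : (0 : X) ∈ V := h ▸ hrep.mapsTo g hx
  apply hx0
  rw [← hrep.act_one x hx, ← inv_mul_cancel g, hrep.act_mul _ _ _ hx, h]
  simpa using hrep.act_smul g⁻¹ h0 (le_refl (0 : ℝ))

theorem nonempty_of_isConicSection (hrep : IsConicRep G V τ) {L : X → ℝ} {Q : Set X}
    (hsec : IsConicSection V L Q) : Q.Nonempty := by
  obtain ⟨x, hx⟩ := hrep.nonempty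
  have h0 : (0 : X) ∈ V := by simpa using hrep.smul_mem hx le_rfl
  obtain ⟨y, hy, hy0⟩ := ((nontrivial_iff_ne_singleton h0).2 hrep.ne_zero).exists_ne 0
  exact ⟨_, hsec.sectionProj_mem hrep.cone hy hy0⟩

end IsConicRep

namespace IsConicHom

variable {G X₁ X₂ : Type*} [Group G]
  [AddCommGroup X₁] [Module ℝ X₁] [TopologicalSpace X₁]
  [AddCommGroup X₂] [Module ℝ X₂] [TopologicalSpace X₂]
  {V₁ : Set X₁} {τ : G → X₁ → X₁} {V₂ : Set X₂} {η : G → X₂ → X₂} {φ ψ : X₁ → X₂}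
  {L : X₁ → ℝ} {Q : Set X₁} {x y : X₁}

theorem map_smul (hφ : IsConicHom G V₁ τ V₂ η φ) (hx : x ∈ V₁) {c : ℝ} (hc : 0 ≤ c) :
    φ (c • x) = c • φ x := by
  simpa using hφ.conic x hx x hx c 0 hc le_rfl

theorem continuousOn_sectionProj [ContinuousSMul ℝ X₂] (hφ : IsConicHom G V₁ τ V₂ η φ)
    (hsec : IsConicSection V₁ L Q) {L₂ : X₂ → ℝ} {Q₂ : Set X₂}
    (hsec₂ : IsConicSection V₂ L₂ Q₂) : ContinuousOn (fun x => sectionProj L₂ (φ x)) Q :=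
  hsec₂.continuousOn_sectionProj.comp (hφ.continuousOn.mono hsec.subset) fun x hx =>
    ⟨hφ.mapsTo (hsec.subset hx), hφ.ne_zero x (hsec.subset hx) (hsec.ne_zero_of_mem hx)⟩

variable [TopologicalSpace G]

theorem add [ContinuousAdd X₂] (hrep₂ : IsConicRep G V₂ η) (hφ : IsConicHom G V₁ τ V₂ η φ)
    (hψ : IsConicHom G V₁ τ V₂ η ψ) : IsConicHom G V₁ τ V₂ η (φ + ψ) where
  continuousOn := hφ.continuousOn.add hψ.continuousOn
  mapsTo x hx := hrep₂.add_mem (hφ.mapsTo hx) (hψ.mapsTo hx)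
  conic x hx y hy a b ha hb := by
    simp only [Pi.add_apply, hφ.conic x hx y hy a b ha hb, hψ.conic x hx y hy a b ha hb]
    module
  ne_zero x hx hx0 h := by
    obtain ⟨L₂, Q₂, hsec₂, -⟩ := hrep₂.exists_compact_section
    have hsum := hsec₂.map_add _ (hφ.mapsTo hx) _ (hψ.mapsTo hx)
    have h0 : φ x + ψ x = 0 := h
    rw [h0, hsec₂.map_zero (h0 ▸ hrep₂.add_mem (hφ.mapsTo hx) (hψ.mapsTo hx))] at hsum
    linarith [hsec₂.pos _ (hφ.mapsTo hx) (hφ.ne_zero x hx hx0), hsec₂.nonneg _ (hψ.mapsTo hx)]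
  equivariant g x hx := by
    simp only [Pi.add_apply, hφ.equivariant g x hx, hψ.equivariant g x hx,
      hrep₂.act_add g (hφ.mapsTo hx) (hψ.mapsTo hx)]

theorem smul [ContinuousConstSMul ℝ X₂] (hrep₂ : IsConicRep G V₂ η)
    (hφ : IsConicHom G V₁ τ V₂ η φ) {a : ℝ} (ha : 0 < a) : IsConicHom G V₁ τ V₂ η (a • φ) where
  continuousOn := hφ.continuousOn.const_smul a
  mapsTo x hx := hrep₂.smul_mem (hφ.mapsTo hx) ha.le
  conic x hx y hy p q hp hq := by
    simp only [Pi.smul_apply, hφ.conic x hx y hy p q hp hq, smul_add, smul_comm a p, smul_comm a q]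
  ne_zero x hx hx0 := smul_ne_zero ha.ne' (hφ.ne_zero x hx hx0)
  equivariant g x hx := by
    simp only [Pi.smul_apply, hφ.equivariant g x hx, hrep₂.act_smul g (hφ.mapsTo hx) ha.le]

theorem image_eq_Ici_smul_image (hrep₁ : IsConicRep G V₁ τ) (hφ : IsConicHom G V₁ τ V₂ η φ)
    (hsec : IsConicSection V₁ L Q) : φ '' V₁ = Ici (0 : ℝ) • φ '' Q := by
  rw [← hsec.Ici_smul_eq hrep₁.cone (hrep₁.nonempty_of_isConicSection hsec)]
  ext y
  constructor
  · rintro ⟨_, ⟨t, ht, q, hq, rfl⟩, rfl⟩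
    exact ⟨t, ht, φ q, mem_image_of_mem φ hq, (hφ.map_smul (hsec.subset hq) ht).symm⟩
  · rintro ⟨t, ht, _, ⟨q, hq, rfl⟩, rfl⟩
    exact ⟨t • q, ⟨t, ht, q, hq, rfl⟩, hφ.map_smul (hsec.subset hq) ht⟩

theorem Ici_smul_image_eq_of_irreducible [ContinuousSMul ℝ X₂] [T2Space X₂]
    (hrep₁ : IsConicRep G V₁ τ) (hirr₂ : IsIrreducibleConicRep G V₂ η)
    (hφ : IsConicHom G V₁ τ V₂ η φ) (hsec : IsConicSection V₁ L Q) (hQ : IsCompact Q) :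
    Ici (0 : ℝ) • φ '' Q = V₂ := by
  rw [← hφ.image_eq_Ici_smul_image hrep₁ hsec]
  obtain ⟨q, hq⟩ := hrep₁.nonempty_of_isConicSection hsec
  have hφq : φ q ∈ φ '' V₁ := mem_image_of_mem φ (hsec.subset hq)
  refine hirr₂ _ hφ.mapsTo.image_subset ⟨_, hφq⟩ ?_ ?_ ?_ ?_
  · intro h
    rw [h] at hφq
    exact hφ.ne_zero q (hsec.subset hq) (hsec.ne_zero_of_mem hq) hφq
  · rw [hφ.image_eq_Ici_smul_image hrep₁ hsec]
    refine (hQ.image_of_continuousOn (hφ.continuousOn.mono hsec.subset)).isClosed_Ici_smul ?_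
    rintro ⟨x, hx, hx0⟩
    exact hφ.ne_zero x (hsec.subset hx) (hsec.ne_zero_of_mem hx) hx0
  · rintro _ ⟨x, hx, rfl⟩ _ ⟨y, hy, rfl⟩ a b ha hb
    exact ⟨_, hrep₁.cone x hx y hy a b ha hb, hφ.conic x hx y hy a b ha hb⟩
  · rintro g _ ⟨x, hx, rfl⟩
    exact ⟨τ g x, hrep₁.mapsTo g hx, hφ.equivariant g x hx⟩

theorem image_sectionProj_eq_of_irreducible [ContinuousSMul ℝ X₂] [T2Space X₂]
    (hrep₁ : IsConicRep G V₁ τ) (hrep₂ : IsConicRep G V₂ η)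
    (hirr₂ : IsIrreducibleConicRep G V₂ η) (hφ : IsConicHom G V₁ τ V₂ η φ)
    (hsec : IsConicSection V₁ L Q) (hQ : IsCompact Q) {L₂ : X₂ → ℝ} {Q₂ : Set X₂}
    (hsec₂ : IsConicSection V₂ L₂ Q₂) : (fun x => sectionProj L₂ (φ x)) '' Q = Q₂ := by
  refine Subset.antisymm ?_ fun q hq => ?_
  · rintro _ ⟨x, hx, rfl⟩
    exact hsec₂.sectionProj_mem hrep₂.cone (hφ.mapsTo (hsec.subset hx))
      (hφ.ne_zero x (hsec.subset hx) (hsec.ne_zero_of_mem hx))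
  have hqV : q ∈ V₂ := hsec₂.subset hq
  rw [← hφ.Ici_smul_image_eq_of_irreducible hrep₁ hirr₂ hsec hQ] at hqV
  obtain ⟨t, ht, _, ⟨x, hx, rfl⟩, rfl⟩ := hqV
  have ht0 : 0 < t := (mem_Ici.1 ht).lt_of_ne <| by
    rintro rfl
    exact hsec₂.ne_zero_of_mem hq (zero_smul ℝ _)
  refine ⟨x, hx, show sectionProj L₂ (φ x) = t • φ x from ?_⟩
  rw [← hsec₂.sectionProj_smul (hφ.mapsTo (hsec.subset hx)) ht0, hsec₂.sectionProj_eq_self hq]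

theorem mapsTo_openSegment_sectionProj (hrep₂ : IsConicRep G V₂ η)
    (hφ : IsConicHom G V₁ τ V₂ η φ) {L₂ : X₂ → ℝ} {Q₂ : Set X₂}
    (hsec₂ : IsConicSection V₂ L₂ Q₂) (hx : x ∈ V₁) (hx0 : x ≠ 0) (hy : y ∈ V₁) (hy0 : y ≠ 0) :
    MapsTo (fun z => sectionProj L₂ (φ z)) (openSegment ℝ x y)
      (openSegment ℝ (sectionProj L₂ (φ x)) (sectionProj L₂ (φ y))) := by
  rintro _ ⟨a, b, ha, hb, -, rfl⟩
  dsimp only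
  rw [hφ.conic x hx y hy a b ha.le hb.le, ← hsec₂.sectionProj_smul (hφ.mapsTo hx) ha,
    ← hsec₂.sectionProj_smul (hφ.mapsTo hy) hb]
  exact hsec₂.sectionProj_add_mem_openSegment (hrep₂.smul_mem (hφ.mapsTo hx) ha.le)
    (smul_ne_zero ha.ne' (hφ.ne_zero x hx hx0)) (hrep₂.smul_mem (hφ.mapsTo hy) hb.le)
    (smul_ne_zero hb.ne' (hφ.ne_zero y hy hy0))

theorem exists_mem_extremePoints_eq_smul [T2Space X₁] [SeparatingDual ℝ X₁] [ContinuousAdd X₂]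
    [ContinuousSMul ℝ X₂] [T2Space X₂] [SeparatingDual ℝ X₂] (hrep₁ : IsConicRep G V₁ τ)
    (hrep₂ : IsConicRep G V₂ η) (hirr₂ : IsIrreducibleConicRep G V₂ η)
    (hφ : IsConicHom G V₁ τ V₂ η φ) (hψ : IsConicHom G V₁ τ V₂ η ψ)
    (hsec : IsConicSection V₁ L Q) (hQ : IsCompact Q) :
    ∃ x ∈ Q.extremePoints ℝ, ∃ a : ℝ, 0 < a ∧ ψ x = a • φ x := by
  obtain ⟨L₂, Q₂, hsec₂, hQ₂⟩ := hrep₂.exists_compact_section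
  have hsum := hφ.add hrep₂ hψ
  have himage := hsum.image_sectionProj_eq_of_irreducible hrep₁ hrep₂ hirr₂ hsec hQ hsec₂
  obtain ⟨e, he⟩ :=
    hQ₂.extremePoints_nonempty_of_separatingDual (hrep₂.nonempty_of_isConicSection hsec₂)
  obtain ⟨x, hx, rfl⟩ := surjOn_extremePoints_image_of_mapsTo_openSegment hQ
    (hsum.continuousOn_sectionProj hsec hsec₂)
    (fun y hy z hz => hsum.mapsTo_openSegment_sectionProj hrep₂ hsec₂ (hsec.subset hy)
      (hsec.ne_zero_of_mem hy) (hsec.subset hz) (hsec.ne_zero_of_mem hz))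
    (himage ▸ he)
  have hxV := hsec.subset (extremePoints_subset hx)
  have hx0 := hsec.ne_zero_of_mem (extremePoints_subset hx)
  exact ⟨x, hx, hsec₂.exists_pos_smul_eq_of_sectionProj_add_mem_extremePoints hrep₂.cone
    (hφ.mapsTo hxV) (hφ.ne_zero x hxV hx0) (hψ.mapsTo hxV) (hψ.ne_zero x hxV hx0) he⟩

theorem eqOn_closure_orbit [T2Space X₂] (hrep₁ : IsConicRep G V₁ τ)
    (hφ : IsConicHom G V₁ τ V₂ η φ) (hψ : IsConicHom G V₁ τ V₂ η ψ)
    (hsec : IsConicSection V₁ L Q) (hQ : IsClosed Q) (hx : x ∈ Q) (hφψ : φ x = ψ x) :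
    EqOn φ ψ (closure {y | ∃ g : G, y = sectionProj L (τ g x)}) := by
  have hxV := hsec.subset hx
  have horbit : {y | ∃ g : G, y = sectionProj L (τ g x)} ⊆ Q := by
    rintro _ ⟨g, rfl⟩
    exact hsec.sectionProj_mem hrep₁.cone (hrep₁.mapsTo g hxV)
      (hrep₁.act_ne_zero g hxV (hsec.ne_zero_of_mem hx))
  have hclosure := (closure_minimal horbit hQ).trans hsec.subset
  refine EqOn.of_subset_closure ?_ (hφ.continuousOn.mono hclosure)
    (hψ.continuousOn.mono hclosure) subset_closure subset_rfl
  rintro _ ⟨g, rfl⟩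
  have hc : 0 ≤ (L (τ g x))⁻¹ := inv_nonneg.2 (hsec.nonneg _ (hrep₁.mapsTo g hxV))
  rw [sectionProj, hφ.map_smul (hrep₁.mapsTo g hxV) hc, hψ.map_smul (hrep₁.mapsTo g hxV) hc,
    hφ.equivariant g x hxV, hψ.equivariant g x hxV, hφψ]

theorem eqOn_of_eqOn_extremePoints [T2Space X₁] [SeparatingDual ℝ X₁] [T2Space X₂]
    (hrep₁ : IsConicRep G V₁ τ) (hφ : IsConicHom G V₁ τ V₂ η φ)
    (hψ : IsConicHom G V₁ τ V₂ η ψ) (hsec : IsConicSection V₁ L Q) (hQ : IsCompact Q)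
    (h : EqOn φ ψ (Q.extremePoints ℝ)) : EqOn φ ψ V₁ := by
  have hQconv := hsec.convex hrep₁.cone
  have hconv : Convex ℝ {y ∈ Q | φ y = ψ y} := by
    rintro y ⟨hy, hφψy⟩ z ⟨hz, hφψz⟩ a b ha hb hab
    refine ⟨hQconv hy hz ha hb hab, ?_⟩
    rw [hφ.conic y (hsec.subset hy) z (hsec.subset hz) a b ha hb,
      hψ.conic y (hsec.subset hy) z (hsec.subset hz) a b ha hb, hφψy, hφψz]
  have hext : Q.extremePoints ℝ ⊆ {y ∈ Q | φ y = ψ y} := fun y hy =>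
    ⟨extremePoints_subset hy, h hy⟩
  have hhull : EqOn φ ψ (convexHull ℝ (Q.extremePoints ℝ)) := fun y hy =>
    (convexHull_min hext hconv hy).2
  have hQeq : EqOn φ ψ Q := hhull.of_subset_closure (hφ.continuousOn.mono hsec.subset)
    (hψ.continuousOn.mono hsec.subset) (convexHull_min extremePoints_subset hQconv)
    (closure_convexHull_extremePoints_of_separatingDual hQ hQconv).ge
  rw [← hsec.Ici_smul_eq hrep₁.cone (hrep₁.nonempty_of_isConicSection hsec)]
  rintro _ ⟨t, ht, q, hq, rfl⟩
  rw [hφ.map_smul (hsec.subset hq) ht, hψ.map_smul (hsec.subset hq) ht, hQeq hq]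

end IsConicHom

theorem stmt_12_general {G X₁ X₂ : Type*} [Group G] [TopologicalSpace G]
    [AddCommGroup X₁] [Module ℝ X₁] [TopologicalSpace X₁]
    [T2Space X₁] [SeparatingDual ℝ X₁]
    [AddCommGroup X₂] [Module ℝ X₂] [TopologicalSpace X₂]
    [IsTopologicalAddGroup X₂] [ContinuousSMul ℝ X₂] [T2Space X₂] [SeparatingDual ℝ X₂]
    (V₁ : Set X₁) (τ : G → X₁ → X₁) (hrep₁ : IsConicRep G V₁ τ)
    (V₂ : Set X₂) (η : G → X₂ → X₂) (hrep₂ : IsConicRep G V₂ η)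
    (hirr₂ : IsIrreducibleConicRep G V₂ η)
    (φ₁ φ₂ : X₁ → X₂)
    (hφ₁ : IsConicHom G V₁ τ V₂ η φ₁) (hφ₂ : IsConicHom G V₁ τ V₂ η φ₂)
    -- a compact section `Q` of `V₁`
    (L : X₁ → ℝ) (Q : Set X₁) (hsec : IsConicSection V₁ L Q) (hQcomp : IsCompact Q)
    -- the induced action `ρ_g x = L(τ_g x)⁻¹ • τ_g x` of `G` on the closure of the set of
    -- extreme points of `Q` is minimal
    (hmin : ∀ x ∈ closure (Q.extremePoints ℝ),
      closure (Q.extremePoints ℝ) ⊆ closure {y | ∃ g : G, y = (L (τ g x))⁻¹ • τ g x}) :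
    ∃ a : ℝ, 0 < a ∧ ∀ x ∈ V₁, φ₂ x = a • φ₁ x := by
  obtain ⟨x, hx, a, ha, hxa⟩ :=
    hφ₁.exists_mem_extremePoints_eq_smul hrep₁ hrep₂ hirr₂ hφ₂ hsec hQcomp
  have hφ₁a := hφ₁.smul hrep₂ ha
  have hclosure : EqOn φ₂ (a • φ₁) (closure (Q.extremePoints ℝ)) :=
    (hφ₂.eqOn_closure_orbit hrep₁ hφ₁a hsec hQcomp.isClosed (extremePoints_subset hx) hxa).mono
      (hmin x (subset_closure hx))
  exact ⟨a, ha, hφ₂.eqOn_of_eqOn_extremePoints hrep₁ hφ₁a hsec hQcomp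
    (hclosure.mono subset_closure)⟩

/-- Let `φ₁, φ₂ : (V₁,τ) → (V₂,η)` be homomorphisms of conic representations
of a topological group `G` such that `(V₂,η)` is irreducible and the induced action of `G` on
the closure of the set of extreme points of some compact section `Q` of `V₁` is minimal.
Then `φ₂ = a·φ₁` for some real number `a > 0`. -/
theorem stmt_12 {G X₁ X₂ : Type*} [Group G] [TopologicalSpace G] [IsTopologicalGroup G]
    [AddCommGroup X₁] [Module ℝ X₁] [TopologicalSpace X₁]
    [IsTopologicalAddGroup X₁] [ContinuousSMul ℝ X₁] [T2Space X₁] [SeparatingDual ℝ X₁]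
    [AddCommGroup X₂] [Module ℝ X₂] [TopologicalSpace X₂]
    [IsTopologicalAddGroup X₂] [ContinuousSMul ℝ X₂] [T2Space X₂] [SeparatingDual ℝ X₂]
    (V₁ : Set X₁) (τ : G → X₁ → X₁) (hrep₁ : IsConicRep G V₁ τ)
    (V₂ : Set X₂) (η : G → X₂ → X₂) (hrep₂ : IsConicRep G V₂ η)
    (hirr₂ : IsIrreducibleConicRep G V₂ η)
    (φ₁ φ₂ : X₁ → X₂)
    (hφ₁ : IsConicHom G V₁ τ V₂ η φ₁) (hφ₂ : IsConicHom G V₁ τ V₂ η φ₂)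
    -- a compact section `Q` of `V₁`
    (L : X₁ → ℝ) (Q : Set X₁) (hsec : IsConicSection V₁ L Q) (hQcomp : IsCompact Q)
    -- the induced action `ρ_g x = L(τ_g x)⁻¹ • τ_g x` of `G` on the closure of the set of
    -- extreme points of `Q` is minimal
    (hmin : ∀ x ∈ closure (Q.extremePoints ℝ),
      closure (Q.extremePoints ℝ) ⊆ closure {y | ∃ g : G, y = (L (τ g x))⁻¹ • τ g x}) :
    ∃ a : ℝ, 0 < a ∧ ∀ x ∈ V₁, φ₂ x = a • φ₁ x :=
  stmt_12_general V₁ τ hrep₁ V₂ η hrep₂ hirr₂ φ₁ φ₂ hφ₁ hφ₂ L Q hsec hQcomp hmin
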